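/- Let f : [0,1] → ℝ be continuously differentiable and monotonically nondecreasing, with ∫₀¹ (t − 2/3)·f(t) dt = 0. Define I(x) = f(1) − 4·f(0) − ∫₀^x (1−3t)²·(f'(1−t) + 8·f'(2t)) dt for x ∈ [0, 1/3]. Then I(x) ≥ 0 for all x ∈ [0, 1/3], and I(1/3) = 0. -/

import Mathlib

open Set intervalIntegral MeasureTheory

/-!
With `w u = (3u - 2)² f'(u)`, the integrand of `I` is `w(1 - t) + 2 w(2t)`; the substitutions
`u = 1 - t` and `u = 2t` map `[0, 1/3]` onto `[2/3, 1]` and `[0, 2/3]`, so `I(1/3) = f(1) - 4 f(0)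
- ∫₀¹ w`. Integrating by parts, `∫₀¹ w = f(1) - 4 f(0) - 18 ∫₀¹ (t - 2/3) f(t) dt = f(1) - 4 f(0)`.
Since `f` is nondecreasing, `f' ≥ 0`, so the integrand is nonnegative and
`I(x) = ∫ₓ^{1/3} (1 - 3t)² (f'(1 - t) + 8 f'(2t)) dt ≥ 0`.
-/

section Substitution

variable {E : Type*} [NormedAddCommGroup E] {w : ℝ → E}

theorem IntervalIntegrable.comp_one_sub_zero_third (hw : IntervalIntegrable w volume 0 1) :
    IntervalIntegrable (fun t ↦ w (1 - t)) volume 0 (1 / 3) :=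
  (by simpa using (hw.comp_sub_left 1).symm : IntervalIntegrable _ volume 0 1).mono_set <|
    uIcc_subset_uIcc (by norm_num) (by norm_num)

theorem IntervalIntegrable.comp_two_mul_zero_third (hw : IntervalIntegrable w volume 0 1) :
    IntervalIntegrable (fun t ↦ w (2 * t)) volume 0 (1 / 3) :=
  (by simpa using hw.comp_mul_left (c := 2) : IntervalIntegrable _ volume 0 (1 / 2)).mono_set <|
    uIcc_subset_uIcc (by norm_num) (by norm_num)

theorem integral_comp_one_sub_add_two_smul_comp_two_mul [NormedSpace ℝ E]
    (hw : IntervalIntegrable w volume 0 1) :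
    ∫ t in (0 : ℝ)..1 / 3, (w (1 - t) + (2 : ℝ) • w (2 * t)) = ∫ u in (0 : ℝ)..1, w u := by
  rw [intervalIntegral.integral_add (g := fun t ↦ (2 : ℝ) • w (2 * t))
      hw.comp_one_sub_zero_third (hw.comp_two_mul_zero_third.smul (2 : ℝ)),
    intervalIntegral.integral_smul, integral_comp_sub_left, integral_comp_mul_left _ two_ne_zero,
    smul_inv_smul₀ two_ne_zero]
  norm_num
  rw [add_comm, integral_add_adjacent_intervals] <;>
    exact hw.mono_set (uIcc_subset_uIcc (by norm_num) (by norm_num))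

end Substitution

theorem integral_three_mul_sub_two_sq_mul_deriv {f f' : ℝ → ℝ}
    (hf : ∀ x ∈ Icc (0 : ℝ) 1, HasDerivWithinAt f (f' x) (Icc 0 1) x)
    (hf' : IntervalIntegrable f' volume 0 1) :
    ∫ u in (0 : ℝ)..1, (3 * u - 2) ^ 2 * f' u
      = f 1 - 4 * f 0 - 18 * ∫ u in (0 : ℝ)..1, (u - 2 / 3) * f u := by
  have hsq (x : ℝ) : HasDerivAt (fun u ↦ (3 * u - 2) ^ 2) (6 * (3 * x - 2)) x :=
    (((hasDerivAt_id' x).const_mul 3).sub_const 2).fun_pow 2 |>.congr_deriv (by ring)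
  rw [integral_mul_deriv_eq_deriv_mul_of_hasDerivWithinAt (fun x _ ↦ (hsq x).hasDerivWithinAt)
      (by rwa [uIcc_of_le zero_le_one]) (Continuous.intervalIntegrable (by fun_prop) _ _) hf']
  norm_num
  rw [← intervalIntegral.integral_const_mul]
  exact integral_congr fun x _ ↦ by ring

theorem I_nonneg_and_vanishes (f f' : ℝ → ℝ)
    (hderiv : ∀ x ∈ Set.Icc (0 : ℝ) 1, HasDerivWithinAt f (f' x) (Set.Icc (0 : ℝ) 1) x)
    (hf'cont : ContinuousOn f' (Set.Icc (0 : ℝ) 1))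
    (hmono : MonotoneOn f (Set.Icc (0 : ℝ) 1))
    (hint : (∫ t in (0 : ℝ)..1, (t - 2/3) * f t) = 0) :
    (∀ x ∈ Set.Icc (0 : ℝ) (1/3),
      0 ≤ f 1 - 4 * f 0 - ∫ t in (0 : ℝ)..x, (1 - 3*t)^2 * (f' (1 - t) + 8 * f' (2*t))) ∧
    f 1 - 4 * f 0 - (∫ t in (0 : ℝ)..(1/3 : ℝ), (1 - 3*t)^2 * (f' (1 - t) + 8 * f' (2*t))) = 0 := by
  set w : ℝ → ℝ := fun u ↦ (3 * u - 2) ^ 2 * f' u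
  have hw : IntervalIntegrable w volume 0 1 :=
    ((by fun_prop : Continuous fun u : ℝ ↦ (3 * u - 2) ^ 2).continuousOn.mul
      hf'cont).intervalIntegrable_of_Icc zero_le_one
  have hw_nonneg (u : ℝ) (hu : u ∈ Icc (0 : ℝ) 1) : 0 ≤ w u :=
    mul_nonneg (sq_nonneg _)
      ((hderiv u hu).nonneg_of_monotoneOn (uniqueDiffOn_Icc zero_lt_one u hu).accPt hmono)
  have hsplit (t : ℝ) :
      (1 - 3 * t) ^ 2 * (f' (1 - t) + 8 * f' (2 * t)) = w (1 - t) + (2 : ℝ) • w (2 * t) := by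
    simp only [w, smul_eq_mul]; ring
  have htotal : ∫ t in (0 : ℝ)..1 / 3, (w (1 - t) + (2 : ℝ) • w (2 * t)) = f 1 - 4 * f 0 := by
    rw [integral_comp_one_sub_add_two_smul_comp_two_mul hw,
      integral_three_mul_sub_two_sq_mul_deriv hderiv (hf'cont.intervalIntegrable_of_Icc
        zero_le_one), hint, mul_zero, sub_zero]
  simp only [hsplit]
  refine ⟨fun x hx ↦ ?_, by rw [htotal, sub_self]⟩
  rw [sub_nonneg, ← htotal]
  refine integral_mono_interval le_rfl hx.1 hx.2 ?_
    (hw.comp_one_sub_zero_third.add (hw.comp_two_mul_zero_third.smul (2 : ℝ)))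
  refine ae_restrict_of_forall_mem measurableSet_Ioc fun t ⟨ht₀, ht₁⟩ ↦ ?_
  exact add_nonneg (hw_nonneg _ ⟨by linarith, by linarith⟩)
    (smul_nonneg zero_le_two (hw_nonneg _ ⟨by linarith, by linarith⟩))
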